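/- Define μ₂(x,y) = BCH(x, (1/2)·BCH(-x,y)). Then μ₂(-x,-y) = -μ₂(x,y). -/

import Mathlib

/-- Noncommutative formal power series in `n` variables over `ℚ`:
the completed free associative algebra, given by coefficient functions on words. -/
abbrev NC (n : ℕ) := List (Fin n) → ℚ

namespace NC
variable {n : ℕ}

/-- Pointwise addition. -/
def add (f g : NC n) : NC n := fun w => f w + g w

/-- Pointwise negation. -/
def neg (f : NC n) : NC n := fun w => - f w

/-- Pointwise subtraction. -/
def sub (f g : NC n) : NC n := fun w => f w - g w

/-- Scalar multiplication. -/
def smul (q : ℚ) (f : NC n) : NC n := fun w => q * f w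

/-- The zero series. -/
def zero : NC n := fun _ => 0

/-- The unit series. -/
def one : NC n := fun w => if w = [] then 1 else 0

/-- The `i`-th generator (noncommuting indeterminate). -/
def X (i : Fin n) : NC n := fun w => if w = [i] then 1 else 0

/-- The Cauchy (concatenation) product of noncommutative series. -/
def mul (f g : NC n) : NC n :=
  fun w => ∑ k ∈ Finset.range (w.length + 1), f (w.take k) * g (w.drop k)

/-- Powers. -/
def pow (f : NC n) : ℕ → NC n
  | 0 => one
  | k + 1 => mul f (pow f k)

/-- The Lie bracket `[f,g] = fg - gf`. -/
def br (f g : NC n) : NC n := sub (mul f g) (mul g f)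

/-- The formal exponential; for a series with zero constant term all but finitely
many terms contribute to each coefficient, so this truncated sum is exact. -/
def exp (f : NC n) : NC n :=
  fun w => ∑ k ∈ Finset.range (w.length + 1), (k.factorial : ℚ)⁻¹ * pow f k w

/-- The formal logarithm; exact on series with constant term `1`. -/
def log (g : NC n) : NC n :=
  fun w => ∑ k ∈ Finset.range (w.length + 1),
    (-1 : ℚ) ^ (k + 1) * (k : ℚ)⁻¹ * pow (sub g one) k w

/-- The Baker–Campbell–Hausdorff series: the unique formal series with
`exp f * exp g = exp (bch f g)`. -/
def bch (f g : NC n) : NC n := log (mul (exp f) (exp g))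

/-- `μ₂(x,y) = BCH(x, ½·BCH(-x,y))`. -/
def mu2 (f g : NC n) : NC n := bch f (smul (1/2) (bch (neg f) g))

/-- Iterated (multi-argument) BCH: `BCH(x₁,…,xₙ) = BCH(x₁, BCH(x₂,…,xₙ))`. -/
def bchList : List (NC n) → NC n
  | [] => zero
  | f :: l => bch f (bchList l)

/-- Truncation: projection onto the span of words of length `≤ d`
(Lie monomials with at most `d - 1` brackets). -/
def trunc (d : ℕ) (f : NC n) : NC n :=
  fun w => if w.length ≤ d then f w else 0

/-- `exp(ad_f)` applied to `g`, i.e. `Σ_k ad_f^k(g)/k!`; for `f` with zero constant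
term all but finitely many terms contribute to each coefficient. -/
def expAd (f g : NC n) : NC n :=
  fun w => ∑ k ∈ Finset.range (w.length + 1),
    (k.factorial : ℚ)⁻¹ * ((fun z => br f z)^[k] g) w

end NC

/-!
Write `E a` for the exponential of a series `a` without constant term. Then
`E (μ₂ x y) = E x * E (½ BCH(-x, y))`, where the second factor is the square root of
`E (-x) * E y` among exponentials. Square roots are unique there (`E a * E a = E (2a)` and `E`
is injective, `log` being its inverse), so they commute with conjugation:
`E (-x) * E (½ BCH(x, -y)) * E x = E (½ BCH(-y, x))`, as both sides square to `E (-y) * E x`.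
Combined with `-BCH(a, b) = BCH(-b, -a)` this rewrites `μ₂(-x, -y)` into `-μ₂(x, y)`.

The truncated sums defining `exp` and `log` are evaluations of the univariate power series
`exp` and `log (1 + X)` at a series without constant term. This evaluation is a ring
homomorphism compatible with substitution, so `exp ∘ log = id` and `log ∘ exp = id` follow from
the power-series identities `exp (log (1 + X)) = 1 + X` and `log (exp X) = X`, and
`E (q a) * E (r a) = E ((q + r) a)` from `exp (q X) * exp (r X) = exp ((q + r) X)`.
-/

namespace PowerSeries

section

variable {R : Type*} [CommRing R]

theorem coeff_subst_eq_sum_range {Q : R⟦X⟧} (hQ : constantCoeff Q = 0)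
    (P : R⟦X⟧) {m N : ℕ} (hm : m < N) :
    coeff m (P.subst Q) = ∑ k ∈ Finset.range N, coeff k P * coeff m (Q ^ k) := by
  rw [coeff_subst' (HasSubst.of_constantCoeff_zero' hQ)]
  refine finsum_eq_sum_of_support_subset _ fun k hk => ?_
  simp only [Function.mem_support, smul_eq_mul, Finset.coe_range, Set.mem_Iio] at hk ⊢
  by_contra! hNk
  have : X ^ k ∣ Q ^ k := pow_dvd_pow_of_dvd (X_dvd_iff.mpr hQ) k
  exact hk (by rw [X_pow_dvd_iff.mp this m (by omega), mul_zero])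

theorem subst_one {a : R⟦X⟧} (ha : HasSubst a) :
    (1 : R⟦X⟧).subst a = 1 := by
  rw [← coe_substAlgHom ha, map_one]

end

variable {A : Type*} [CommRing A] [Algebra ℚ A]

theorem one_add_X_mul_derivative_log : (1 + X) * d⁄dX A (log A) = 1 := by
  ext m
  rcases m with _ | m
  · simp [deriv_log]
  · simp [add_mul, deriv_log, coeff_one, pow_succ]

theorem constantCoeff_exp_sub_one : constantCoeff (exp A - 1) = 0 := by
  rw [map_sub, constantCoeff_exp, map_one, sub_self]

theorem log_subst_exp_sub_one : (log A).subst (exp A - 1) = X := by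
  have hE : HasSubst (exp A - 1) := HasSubst.exp_sub_one
  have : IsAddTorsionFree A := .of_module_rat A
  refine derivative.ext ?_ ?_
  · have h1X : (1 + X : A⟦X⟧).subst (exp A - 1) = exp A := by
      rw [subst_add hE, subst_X hE, subst_one hE, add_sub_cancel]
    rw [derivative_subst hE, map_sub, derivative_exp, Derivation.map_one_eq_zero, sub_zero,
      derivative_X]
    calc (d⁄dX A (log A)).subst (exp A - 1) * exp A
        = ((1 + X) * d⁄dX A (log A)).subst (exp A - 1) := by
          rw [subst_mul hE, h1X, mul_comm]
      _ = 1 := by rw [one_add_X_mul_derivative_log, subst_one hE]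
  · rw [← coeff_zero_eq_constantCoeff_apply,
      coeff_subst_eq_sum_range constantCoeff_exp_sub_one _ zero_lt_one]
    simp

-- A right inverse of `log A` for substitution is its two-sided inverse `substInvOfIsUnit`.
theorem exp_sub_one_subst_log : (exp A - 1).subst (log A) = X := by
  have hlog : IsUnit (coeff 1 (log A)) := by rw [coeff_one_log]; exact isUnit_one
  have hleft : ((log A).substInvOfIsUnit hlog).subst (log A) = X :=
    subst_substInvOfIsUnit_left _ constantCoeff_log hlog
  have hM : (log A).substInvOfIsUnit hlog = exp A - 1 := by
    have h := subst_comp_subst_apply (R := A) (S := A) (T := A) (HasSubst.log (A := A))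
      (HasSubst.exp_sub_one (A := A)) ((log A).substInvOfIsUnit hlog)
    rw [hleft, log_subst_exp_sub_one, X_subst, subst_X HasSubst.exp_sub_one] at h
    exact h.symm
  rw [← hM, hleft]

theorem exp_subst_log : (exp A).subst (log A) = 1 + X := by
  have h := exp_sub_one_subst_log (A := A)
  rw [subst_sub HasSubst.log, subst_one HasSubst.log, sub_eq_iff_eq_add'] at h
  exact h

end PowerSeries

namespace NC
variable {n : ℕ}

open Finset

protected theorem mul_assoc (f g h : NC n) : mul (mul f g) h = mul f (mul g h) := by
  funext w
  let G (j m : ℕ) := f (w.take j) * g ((w.drop j).take m) * h (w.drop (j + m))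
  calc mul (mul f g) h w
        = ∑ i ∈ range (w.length + 1), ∑ j ∈ range (i + 1), G j (i - j) := by
        refine sum_congr rfl fun i hi => ?_
        have hi : i ≤ w.length := Nat.lt_succ_iff.mp (mem_range.mp hi)
        rw [mul, sum_mul, List.length_take, min_eq_left hi]
        refine sum_congr rfl fun j hj => ?_
        have hj : j ≤ i := Nat.lt_succ_iff.mp (mem_range.mp hj)
        simp only [G, List.take_take, min_eq_left hj, List.drop_take, Nat.add_sub_cancel' hj]
    _ = ∑ j ∈ range (w.length + 1), ∑ m ∈ range (w.length + 1 - j), G j m :=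
        sum_range_diag_flip _ _
    _ = mul f (mul g h) w := by
        refine sum_congr rfl fun j hj => ?_
        rw [mul, mul_sum, List.length_drop,
          Nat.sub_add_comm (Nat.lt_succ_iff.mp (mem_range.mp hj))]
        refine sum_congr rfl fun m _ => ?_
        simp only [G, List.drop_drop, mul_assoc]

protected theorem one_mul (f : NC n) : mul one f = f := by
  funext w
  rw [mul, sum_eq_single_of_mem 0 (by simp)]
  · simp [one]
  · intro k hk hk0
    have : w.take k ≠ [] := by
      rw [ne_eq, ← List.length_eq_zero_iff, List.length_take]
      have := mem_range.mp hk
      omega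
    simp [one, this]

protected theorem mul_one (f : NC n) : mul f one = f := by
  funext w
  rw [mul, sum_eq_single_of_mem w.length (by simp)]
  · simp [one]
  · intro k hk hkw
    have : w.drop k ≠ [] := by
      rw [ne_eq, ← List.length_eq_zero_iff, List.length_drop]
      have := mem_range.mp hk
      omega
    simp [one, this]

protected theorem mul_add (f g h : NC n) : mul f (add g h) = add (mul f g) (mul f h) := by
  funext w
  simp only [mul, add, mul_add, sum_add_distrib]

protected theorem add_mul (f g h : NC n) : mul (add f g) h = add (mul f h) (mul g h) := by
  funext w
  simp only [mul, add, add_mul, sum_add_distrib]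

protected theorem zero_mul (f : NC n) : mul zero f = zero := by
  funext w
  simp [mul, zero]

protected theorem mul_zero (f : NC n) : mul f zero = zero := by
  funext w
  simp [mul, zero]

/-- `NC n` with the Cauchy product; a type synonym, since the function type `NC n` already
carries the pointwise product. -/
def Series (n : ℕ) : Type := NC n

def toSeries (f : NC n) : Series n := f

instance : AddCommGroup (Series n) := inferInstanceAs (AddCommGroup (List (Fin n) → ℚ))

instance : Module ℚ (Series n) := inferInstanceAs (Module ℚ (List (Fin n) → ℚ))

instance : Ring (Series n) where
  mul := NC.mul
  one := NC.one
  mul_assoc := NC.mul_assoc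
  one_mul := NC.one_mul
  mul_one := NC.mul_one
  left_distrib := NC.mul_add
  right_distrib := NC.add_mul
  zero_mul := NC.zero_mul
  mul_zero := NC.mul_zero

namespace Series

theorem mul_apply (f g : Series n) (w : List (Fin n)) :
    (f * g) w = ∑ k ∈ range (w.length + 1), f (w.take k) * g (w.drop k) := rfl

theorem smul_apply (q : ℚ) (f : Series n) (w : List (Fin n)) : (q • f) w = q * f w := rfl

theorem mul_apply_nil (f g : Series n) : (f * g) [] = f [] * g [] := by
  simp [mul_apply]

theorem one_apply_nil : (1 : Series n) [] = 1 := rfl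

instance : Algebra ℚ (Series n) := Algebra.ofModule
  (fun q f g => by funext w; simp only [mul_apply, smul_apply, mul_sum, mul_assoc])
  (fun q f g => by funext w; simp only [mul_apply, smul_apply, mul_sum, mul_left_comm])

end Series

theorem toSeries_pow (f : NC n) (k : ℕ) : toSeries (pow f k) = toSeries f ^ k := by
  induction k with
  | zero => rfl
  | succ k ih => rw [pow_succ', ← ih]; rfl

protected theorem pow_apply (f : NC n) (k : ℕ) (w : List (Fin n)) :
    pow f k w = (toSeries f ^ k) w := by
  rw [← toSeries_pow]
  rfl

theorem toSeries_smul (q : ℚ) (f : NC n) : toSeries (smul q f) = q • toSeries f := rfl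

protected theorem one_smul (f : NC n) : smul 1 f = f := by
  funext w
  exact one_mul (f w)

theorem neg_eq_neg_one_smul (f : NC n) : neg f = smul (-1) f := by
  funext w
  exact (neg_one_mul (f w)).symm

protected theorem neg_neg (f : NC n) : neg (neg f) = f := by
  funext w
  exact _root_.neg_neg (f w)

theorem neg_smul_eq_smul_neg (q : ℚ) (f : NC n) : neg (smul q f) = smul q (neg f) := by
  funext w
  exact (mul_neg q (f w)).symm

theorem neg_apply_nil {f : NC n} (hf : f [] = 0) : neg f [] = 0 := by
  simp [neg, hf]

theorem smul_apply_nil (q : ℚ) {f : NC n} (hf : f [] = 0) : smul q f [] = 0 := by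
  simp [smul, hf]

theorem X_apply_nil (i : Fin n) : X i [] = 0 := by
  simp [X]

section Eval

open PowerSeries

theorem pow_apply_eq_zero {h : Series n} (hh : h [] = 0) {k : ℕ} {w : List (Fin n)}
    (hw : w.length < k) : (h ^ k) w = 0 := by
  induction k generalizing w with
  | zero => omega
  | succ k ih =>
    rw [pow_succ', Series.mul_apply]
    refine sum_eq_zero fun i hi => ?_
    rcases Nat.eq_zero_or_pos i with rfl | hi0
    · rw [List.take_zero, hh, zero_mul]
    · have := mem_range.mp hi
      rw [ih (by rw [List.length_drop]; omega), mul_zero]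

/-- Evaluation of a univariate power series at `h`. For `h` with zero constant term only the
powers `h ^ k` with `k ≤ w.length` contribute to the coefficient of `w`. -/
noncomputable def eval (h : Series n) (P : ℚ⟦X⟧) : Series n :=
  fun w => ∑ k ∈ range (w.length + 1), coeff k P * (h ^ k) w

theorem eval_apply (h : Series n) (P : ℚ⟦X⟧) (w : List (Fin n)) :
    eval h P w = ∑ k ∈ range (w.length + 1), coeff k P * (h ^ k) w := rfl

variable {h : Series n}

theorem eval_apply_eq_sum_range (hh : h [] = 0) (P : ℚ⟦X⟧) {w : List (Fin n)} {N : ℕ}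
    (hN : w.length < N) : eval h P w = ∑ k ∈ range N, coeff k P * (h ^ k) w := by
  refine sum_subset (range_subset_range.mpr hN) fun k hkN hkw => ?_
  rw [pow_apply_eq_zero hh (by simpa using hkw), mul_zero]

theorem eval_apply_nil (h : Series n) (P : ℚ⟦X⟧) : eval h P [] = constantCoeff P := by
  simp [eval, Series.one_apply_nil]

theorem eval_one (h : Series n) : eval h 1 = 1 := by
  funext w
  rw [eval, sum_eq_single_of_mem 0 (by simp)]
  · simp
  · intro k _ hk
    rw [coeff_one, if_neg hk, zero_mul]

theorem eval_add (h : Series n) (P Q : ℚ⟦X⟧) : eval h (P + Q) = eval h P + eval h Q := by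
  funext w
  simp only [eval, map_add, add_mul, sum_add_distrib]
  rfl

theorem eval_X (hh : h [] = 0) : eval h PowerSeries.X = h := by
  funext w
  rw [eval_apply_eq_sum_range hh PowerSeries.X (by omega : w.length < w.length + 2),
    sum_eq_single_of_mem 1 (by simp)]
  · simp
  · intro k _ hk
    rw [coeff_X, if_neg hk, zero_mul]

theorem eval_mul (hh : h [] = 0) (P Q : ℚ⟦X⟧) : eval h (P * Q) = eval h P * eval h Q := by
  funext w
  set N := w.length + 1
  let F (k l : ℕ) := coeff k P * coeff l Q * (h ^ (k + l)) w
  calc eval h (P * Q) w = ∑ m ∈ range N, ∑ k ∈ range (m + 1), F k (m - k) := by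
        refine sum_congr rfl fun m _ => ?_
        rw [coeff_mul, sum_mul, Nat.sum_antidiagonal_eq_sum_range_succ_mk]
        refine sum_congr rfl fun k hk => ?_
        simp only [F, Nat.add_sub_cancel' (Nat.lt_succ_iff.mp (mem_range.mp hk))]
    _ = ∑ k ∈ range N, ∑ l ∈ range (N - k), F k l := sum_range_diag_flip _ _
    _ = ∑ k ∈ range N, ∑ l ∈ range N, F k l := by
        refine sum_congr rfl fun k _ => sum_subset (range_subset_range.mpr (Nat.sub_le _ _)) ?_
        intro l _ hl
        rw [mem_range, not_lt] at hl
        simp only [F, pow_apply_eq_zero hh (by omega : w.length < k + l), mul_zero]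
    _ = ∑ i ∈ range N, (∑ k ∈ range N, coeff k P * (h ^ k) (w.take i)) *
          (∑ l ∈ range N, coeff l Q * (h ^ l) (w.drop i)) := by
        simp only [sum_mul_sum]
        simp only [F, pow_add, Series.mul_apply, mul_sum]
        conv_rhs => rw [sum_comm]
        refine sum_congr rfl fun k _ => ?_
        conv_rhs => rw [sum_comm]
        exact sum_congr rfl fun l _ => sum_congr rfl fun i _ => by ring
    _ = (eval h P * eval h Q) w := by
        refine sum_congr rfl fun i hi => ?_
        have := mem_range.mp hi
        rw [eval_apply_eq_sum_range hh P (by simp; omega : (w.take i).length < N),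
          eval_apply_eq_sum_range hh Q (by simp; omega : (w.drop i).length < N)]

theorem eval_pow (hh : h [] = 0) (P : ℚ⟦X⟧) (k : ℕ) : eval h (P ^ k) = eval h P ^ k := by
  induction k with
  | zero => rw [pow_zero, pow_zero, eval_one]
  | succ k ih => rw [pow_succ, pow_succ, eval_mul hh, ih]

theorem eval_subst (hh : h [] = 0) {Q : ℚ⟦X⟧} (hQ : constantCoeff Q = 0) (P : ℚ⟦X⟧) :
    eval h (P.subst Q) = eval (eval h Q) P := by
  have hhQ : eval h Q [] = 0 := by rw [eval_apply_nil, hQ]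
  funext w
  set N := w.length + 1
  calc eval h (P.subst Q) w
      = ∑ m ∈ range N, ∑ k ∈ range N, coeff k P * coeff m (Q ^ k) * (h ^ m) w := by
        refine sum_congr rfl fun m hm => ?_
        rw [coeff_subst_eq_sum_range hQ P (mem_range.mp hm), sum_mul]
    _ = ∑ k ∈ range N, coeff k P * (eval h Q ^ k) w := by
        rw [sum_comm]
        refine sum_congr rfl fun k _ => ?_
        rw [← eval_pow hh, eval, mul_sum]
        exact sum_congr rfl fun m _ => mul_assoc _ _ _
    _ = eval (eval h Q) P w := (eval_apply_eq_sum_range hhQ P (Nat.lt_succ_self _)).symm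

end Eval

theorem toSeries_exp (f : NC n) : toSeries (exp f) = eval (toSeries f) (PowerSeries.exp ℚ) := by
  funext w
  change exp f w = _
  rw [exp, eval_apply]
  refine sum_congr rfl fun k _ => ?_
  rw [NC.pow_apply, PowerSeries.coeff_exp, Algebra.algebraMap_self, RingHom.id_apply, one_div]

theorem toSeries_log (g : NC n) :
    toSeries (log g) = eval (toSeries g - 1) (PowerSeries.log ℚ) := by
  funext w
  change log g w = _
  rw [log, eval_apply]
  refine sum_congr rfl fun k _ => ?_
  rw [NC.pow_apply, PowerSeries.coeff_log]
  rcases eq_or_ne k 0 with rfl | hk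
  · simp
  · rw [if_neg hk, Algebra.algebraMap_self, RingHom.id_apply, div_eq_mul_inv]
    rfl

theorem exp_apply_nil (f : NC n) : exp f [] = 1 := by
  change toSeries (exp f) [] = 1
  rw [toSeries_exp, eval_apply_nil, PowerSeries.constantCoeff_exp]

theorem log_apply_nil (g : NC n) : log g [] = 0 := by
  change toSeries (log g) [] = 0
  rw [toSeries_log, eval_apply_nil, PowerSeries.constantCoeff_log]

theorem exp_log {g : NC n} (hg : g [] = 1) : exp (log g) = g := by
  have hg1 : (toSeries g - 1) [] = 0 := sub_eq_zero.mpr hg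
  change toSeries (exp (log g)) = toSeries g
  rw [toSeries_exp, toSeries_log, ← eval_subst hg1 PowerSeries.constantCoeff_log,
    PowerSeries.exp_subst_log, eval_add, eval_one, eval_X hg1, add_sub_cancel]

theorem log_exp {f : NC n} (hf : f [] = 0) : log (exp f) = f := by
  have hf' : toSeries f [] = 0 := hf
  change toSeries (log (exp f)) = toSeries f
  rw [toSeries_log, toSeries_exp, ← eval_one (toSeries f),
    ← sub_add_cancel (PowerSeries.exp ℚ) 1, eval_add, add_sub_cancel_right,
    ← eval_subst hf' PowerSeries.constantCoeff_exp_sub_one, PowerSeries.log_subst_exp_sub_one,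
    eval_X hf']

theorem exp_injective {f g : NC n} (hf : f [] = 0) (hg : g [] = 0)
    (h : toSeries (exp f) = toSeries (exp g)) : f = g := by
  rw [← log_exp hf, ← log_exp hg]
  exact congrArg log h

theorem toSeries_exp_smul (q : ℚ) (f : NC n) :
    toSeries (exp (smul q f)) =
      eval (toSeries f) (PowerSeries.rescale q (PowerSeries.exp ℚ)) := by
  funext w
  change exp (smul q f) w = _
  rw [exp, eval_apply]
  refine sum_congr rfl fun k _ => ?_
  rw [NC.pow_apply, toSeries_smul, smul_pow, Series.smul_apply, PowerSeries.coeff_rescale,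
    PowerSeries.coeff_exp, Algebra.algebraMap_self, RingHom.id_apply]
  ring

theorem exp_smul_mul_exp_smul {f : NC n} (hf : f [] = 0) (q r : ℚ) :
    toSeries (exp (smul q f)) * toSeries (exp (smul r f)) = toSeries (exp (smul (q + r) f)) := by
  rw [toSeries_exp_smul, toSeries_exp_smul, toSeries_exp_smul,
    ← PowerSeries.exp_mul_exp_eq_exp_add, eval_mul (h := toSeries f) hf]

theorem bch_apply_nil (f g : NC n) : bch f g [] = 0 :=
  log_apply_nil _

theorem toSeries_exp_bch (f g : NC n) :
    toSeries (exp (bch f g)) = toSeries (exp f) * toSeries (exp g) := by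
  have h1 : mul (exp f) (exp g) [] = 1 := by
    change (toSeries (exp f) * toSeries (exp g)) [] = 1
    rw [Series.mul_apply_nil]
    change exp f [] * exp g [] = 1
    rw [exp_apply_nil, exp_apply_nil, one_mul]
  exact congrArg toSeries (exp_log h1)

theorem exp_smul_mul_exp_smul_of_add_eq_zero {f : NC n} (hf : f [] = 0) {q r : ℚ}
    (hqr : q + r = 0) : toSeries (exp (smul q f)) * toSeries (exp (smul r f)) = 1 := by
  rw [exp_smul_mul_exp_smul hf, hqr, toSeries_exp_smul, PowerSeries.rescale_zero,
    RingHom.comp_apply, PowerSeries.constantCoeff_exp, map_one, eval_one]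

theorem exp_mul_exp_neg {f : NC n} (hf : f [] = 0) :
    toSeries (exp f) * toSeries (exp (neg f)) = 1 := by
  have h := exp_smul_mul_exp_smul_of_add_eq_zero hf (add_neg_cancel (1 : ℚ))
  rwa [NC.one_smul, ← neg_eq_neg_one_smul] at h

theorem exp_neg_mul_exp {f : NC n} (hf : f [] = 0) :
    toSeries (exp (neg f)) * toSeries (exp f) = 1 := by
  have h := exp_smul_mul_exp_smul_of_add_eq_zero hf (neg_add_cancel (1 : ℚ))
  rwa [NC.one_smul, ← neg_eq_neg_one_smul] at h

theorem exp_half_mul_exp_half {f : NC n} (hf : f [] = 0) :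
    toSeries (exp (smul (1 / 2) f)) * toSeries (exp (smul (1 / 2) f)) = toSeries (exp f) := by
  rw [exp_smul_mul_exp_smul hf, add_halves, NC.one_smul]

theorem exp_mul_exp_self {f : NC n} (hf : f [] = 0) :
    toSeries (exp f) * toSeries (exp f) = toSeries (exp (smul 2 f)) := by
  have h := exp_smul_mul_exp_smul hf 1 1
  rwa [NC.one_smul, one_add_one_eq_two] at h

theorem eq_of_exp_mul_exp_self_eq {c d : NC n} (hc : c [] = 0) (hd : d [] = 0)
    (h : toSeries (exp c) * toSeries (exp c) = toSeries (exp d) * toSeries (exp d)) : c = d := by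
  rw [exp_mul_exp_self hc, exp_mul_exp_self hd] at h
  have h2 := exp_injective (smul_apply_nil 2 hc) (smul_apply_nil 2 hd) h
  funext w
  exact mul_left_cancel₀ two_ne_zero (congrFun h2 w)

theorem neg_bch {f g : NC n} (hf : f [] = 0) (hg : g [] = 0) :
    neg (bch f g) = bch (neg g) (neg f) := by
  refine exp_injective (neg_apply_nil (bch_apply_nil f g)) (bch_apply_nil _ _) ?_
  refine left_inv_eq_right_inv (exp_neg_mul_exp (bch_apply_nil f g)) ?_
  rw [toSeries_exp_bch, toSeries_exp_bch, mul_assoc, ← mul_assoc (toSeries (exp g)),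
    exp_mul_exp_neg hg, one_mul, exp_mul_exp_neg hf]

theorem exp_half_conj {u v : Series n} (hvu : v * u = 1) {a b : NC n} (ha : a [] = 0)
    (hb : b [] = 0) (h : u * toSeries (exp a) * v = toSeries (exp b)) :
    u * toSeries (exp (smul (1 / 2) a)) * v = toSeries (exp (smul (1 / 2) b)) := by
  have hr : (u * toSeries (exp (smul (1 / 2) a)) * v) [] = 1 := by
    rw [Series.mul_apply_nil, Series.mul_apply_nil, mul_right_comm, mul_comm (u []),
      ← Series.mul_apply_nil, hvu, Series.one_apply_nil, one_mul]
    exact exp_apply_nil _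
  set r := u * toSeries (exp (smul (1 / 2) a)) * v
  have hexp : toSeries (exp (log r)) = r := congrArg toSeries (exp_log hr)
  have hsq : toSeries (exp (log r)) * toSeries (exp (log r)) =
      toSeries (exp (smul (1 / 2) b)) * toSeries (exp (smul (1 / 2) b)) := by
    rw [exp_half_mul_exp_half hb, ← h, ← exp_half_mul_exp_half ha, hexp]
    calc r * r = u * toSeries (exp (smul (1 / 2) a)) * (v * u) *
          toSeries (exp (smul (1 / 2) a)) * v := by simp only [r, mul_assoc]
      _ = _ := by rw [hvu, mul_one, mul_assoc u, mul_assoc u]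
  rw [← hexp, eq_of_exp_mul_exp_self_eq (log_apply_nil r) (smul_apply_nil _ hb) hsq]

theorem mu2_neg_neg {f g : NC n} (hf : f [] = 0) (hg : g [] = 0) :
    mu2 (neg f) (neg g) = neg (mu2 f g) := by
  rw [mu2, mu2, NC.neg_neg, neg_bch hf (smul_apply_nil _ (bch_apply_nil _ _)),
    neg_smul_eq_smul_neg, neg_bch (neg_apply_nil hf) hg, NC.neg_neg]
  -- the goal is now `BCH(-f, ½ BCH(f, -g)) = BCH(½ BCH(-g, f), -f)`
  refine exp_injective (bch_apply_nil _ _) (bch_apply_nil _ _) ?_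
  have hconj : toSeries (exp (neg f)) * toSeries (exp (bch f (neg g))) * toSeries (exp f) =
      toSeries (exp (bch (neg g) f)) := by
    rw [toSeries_exp_bch, toSeries_exp_bch, ← mul_assoc, exp_neg_mul_exp hf, one_mul]
  have hconj_half := exp_half_conj (exp_mul_exp_neg hf) (bch_apply_nil _ _) (bch_apply_nil _ _)
    hconj
  rw [toSeries_exp_bch, toSeries_exp_bch, ← hconj_half, mul_assoc _ (toSeries (exp f)),
    exp_mul_exp_neg hf, mul_one]

end NC

/-- `μ₂(-x,-y) = -μ₂(x,y)`. -/
theorem mu2_neg :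
    NC.mu2 (NC.neg (NC.X (0 : Fin 2))) (NC.neg (NC.X 1))
      = NC.neg (NC.mu2 (NC.X 0) (NC.X 1)) :=
  NC.mu2_neg_neg (NC.X_apply_nil 0) (NC.X_apply_nil 1)
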